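/- arXiv:2305.10741 — 6 statements merged into one kernel-verified Lean document; each statement's English description precedes it below -/
import Mathlib

section
/- Let q ≥ 2 and n ≥ 2 be integers, let a = a_1 a_2 … a_n ∈ C_{q,n}, and let b ∈ A. Then S_{a(n)}(1; b) = Σ_{c ∈ A\{b}} S_{a(n−1)}(1; c) if a_n = b; S_{a(n)}(1; b) = 0 if a_{n−1} = b; and S_{a(n)}(1; b) = 1 if a_n ≠ b and a_{n−1} ≠ b. (For length 1, the initial condition is S_{a(1)}(1; b) = 0 if a_1 = b and S_{a(1)}(1; b) = 1 otherwise.) -/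
open scoped Classical

/-- A sequence `a` of length `n` over an alphabet of size `q` is homopolymer free (HF)
if no two consecutive symbols are equal. -/
def isHF {q n : ℕ} (a : Fin n → Fin q) : Prop :=
  ∀ i : ℕ, ∀ h : i + 1 < n, a ⟨i, by omega⟩ ≠ a ⟨i + 1, h⟩

/-- `HFset q n` is the set `C_{q,n}` of all HF sequences of length `n`. -/
noncomputable def HFset (q n : ℕ) : Finset (Fin n → Fin q) :=
  Finset.univ.filter isHF

/-- `Scount q t ht x r b` is `S_x(r; b)`: the number of HF sequences `z` of length `t`
with Hamming distance `r` from `x` whose last symbol is `b`. -/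
noncomputable def Scount (q t : ℕ) (ht : 0 < t) (x : Fin t → Fin q) (r : ℕ) (b : Fin q) : ℕ :=
  ((HFset q t).filter (fun z => hammingDist x z = r ∧ z ⟨t - 1, by omega⟩ = b)).card

lemma hd_one {q n : ℕ} (x z : Fin n → Fin q) :
    hammingDist x z = 1 ↔ ∃ i, x i ≠ z i ∧ ∀ j, j ≠ i → x j = z j := by
  rw [hammingDist, Finset.card_eq_one]
  constructor
  · rintro ⟨i, hi⟩
    have hmem : ∀ j : Fin n, x j ≠ z j ↔ j = i := by
      intro j
      rw [show (x j ≠ z j) ↔ j ∈ ({k | x k ≠ z k} : Finset (Fin n)) by simp, hi,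
        Finset.mem_singleton]
    exact ⟨i, (hmem i).mpr rfl, fun j hj => not_not.mp (fun h => hj ((hmem j).mp h))⟩
  · rintro ⟨i, h1, h2⟩
    refine ⟨i, ?_⟩
    ext j
    simp only [Finset.mem_filter, Finset.mem_univ, true_and, Finset.mem_singleton]
    constructor
    · intro h
      by_contra hj
      exact (by simpa using h : x j ≠ z j) (h2 j hj)
    · rintro rfl
      simpa using h1

lemma mem_HFset {q n : ℕ} (z : Fin n → Fin q) : z ∈ HFset q n ↔ isHF z := by
  simp [HFset]
lemma isHF_ne {q n : ℕ} {z : Fin n → Fin q} (hz : isHF z) {i j : ℕ}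
    (hi : i < n) (hj : j < n) (hij : j = i + 1) : z ⟨i, hi⟩ ≠ z ⟨j, hj⟩ := by
  subst hij; exact hz i hj

lemma prefix_bij (q n : ℕ) (hn : 2 ≤ n) (a : Fin n → Fin q) (haHF : isHF a)
    (b : Fin q) (hb : a ⟨n - 1, by omega⟩ = b) :
    ((HFset q n).filter (fun z => hammingDist a z = 1 ∧ z ⟨n - 1, by omega⟩ = b)).card
      = ((HFset q (n - 1)).filter (fun z =>
          hammingDist (fun j => a (Fin.castLE (by omega) j)) z = 1 ∧
          z ⟨n - 1 - 1, by omega⟩ ≠ b)).card := by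
  refine Finset.card_bij (fun z _ => fun j : Fin (n - 1) => z (Fin.castLE (by omega) j))
    ?_ ?_ ?_
  · -- maps into target
    intro z hz
    rw [Finset.mem_filter, mem_HFset] at hz
    obtain ⟨hzHF, hd, hlast⟩ := hz
    rw [hd_one] at hd
    obtain ⟨i, hi, huniq⟩ := hd
    have hi_lt : i.val < n - 1 := by
      by_contra h
      have hieq : i = ⟨n - 1, by omega⟩ := by
        apply Fin.ext
        show (i : ℕ) = n - 1
        have := i.isLt
        omega
      rw [hieq] at hi
      exact hi (hb.trans hlast.symm)
    have comp1 : isHF (fun j : Fin (n - 1) => z (Fin.castLE (by omega) j)) := by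
      intro k hk
      exact hzHF k (by omega)
    have comp2 : hammingDist (fun j : Fin (n - 1) => a (Fin.castLE (by omega) j))
        (fun j : Fin (n - 1) => z (Fin.castLE (by omega) j)) = 1 := by
      rw [hd_one]
      refine ⟨⟨i.val, hi_lt⟩, hi, ?_⟩
      intro j hj
      apply huniq (Fin.castLE (by omega) j)
      intro hc
      apply hj
      apply Fin.ext
      show (j : ℕ) = (i : ℕ)
      exact congrArg Fin.val hc
    have comp3 : z ⟨n - 1 - 1, show n - 1 - 1 < n by omega⟩ ≠ b := by
      intro hc
      exact isHF_ne (i := n - 1 - 1) (j := n - 1) hzHF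
        (show n - 1 - 1 < n by omega) (show n - 1 < n by omega)
        (show n - 1 = n - 1 - 1 + 1 by omega) (hc.trans hlast.symm)
    rw [Finset.mem_filter, mem_HFset]
    exact ⟨comp1, comp2, comp3⟩
  · -- injective
    intro z1 hz1 z2 hz2 heq
    rw [Finset.mem_filter] at hz1 hz2
    funext j
    by_cases hj : j.val < n - 1
    · exact congrFun heq ⟨j.val, hj⟩
    · have hj' : j = ⟨n - 1, by omega⟩ := by
        apply Fin.ext
        show (j : ℕ) = n - 1
        have := j.isLt
        omega
      rw [hj']
      exact hz1.2.2.trans hz2.2.2.symm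
  · -- surjective
    intro z' hz'
    rw [Finset.mem_filter, mem_HFset] at hz'
    obtain ⟨hHF', hd', hlastne⟩ := hz'
    rw [hd_one] at hd'
    obtain ⟨i', hi', huniq'⟩ := hd'
    refine ⟨fun i : Fin n => if h : i.val < n - 1 then z' ⟨i.val, h⟩ else b, ?_, ?_⟩
    · rw [Finset.mem_filter, mem_HFset]
      refine ⟨?_, ?_, ?_⟩
      · -- HF
        intro k hk
        show (if h : k < n - 1 then z' ⟨k, h⟩ else b) ≠
          (if h : k + 1 < n - 1 then z' ⟨k + 1, h⟩ else b)
        by_cases h1 : k + 1 < n - 1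
        · rw [dif_pos (show k < n - 1 by omega), dif_pos h1]
          exact hHF' k h1
        · have hk2 : k = n - 1 - 1 := by omega
          subst hk2
          rw [dif_pos (show n - 1 - 1 < n - 1 by omega), dif_neg h1]
          exact hlastne
      · -- hamming distance 1
        rw [hd_one]
        refine ⟨⟨i'.val, by omega⟩, ?_, ?_⟩
        · show a (Fin.castLE (by omega) i') ≠
            (if h : (i' : ℕ) < n - 1 then z' ⟨(i' : ℕ), h⟩ else b)
          rw [dif_pos i'.isLt]
          exact hi'
        · intro j hj
          show a j = (if h : (j : ℕ) < n - 1 then z' ⟨(j : ℕ), h⟩ else b)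
          by_cases hjlt : j.val < n - 1
          · rw [dif_pos hjlt]
            apply huniq' ⟨j.val, hjlt⟩
            intro hc
            apply hj
            apply Fin.ext
            show (j : ℕ) = (i' : ℕ)
            exact congrArg Fin.val hc
          · rw [dif_neg hjlt]
            have hj' : j = ⟨n - 1, by omega⟩ := by
              apply Fin.ext
              show (j : ℕ) = n - 1
              have := j.isLt
              omega
            rw [hj']
            exact hb
      · show (if h : n - 1 < n - 1 then z' ⟨n - 1, h⟩ else b) = b
        exact dif_neg (by omega)
    · funext j
      show (if h : (j : ℕ) < n - 1 then z' ⟨(j : ℕ), h⟩ else b) = z' j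
      rw [dif_pos j.isLt]


theorem stmt_3 (q n : ℕ) (hq : 2 ≤ q) (hn : 2 ≤ n)
    (a : Fin n → Fin q) (ha : a ∈ HFset q n) (b : Fin q) :
    (a ⟨n - 1, by omega⟩ = b →
      Scount q n (by omega) a 1 b =
        ∑ c ∈ Finset.univ.erase b,
          Scount q (n - 1) (by omega) (fun j => a (Fin.castLE (by omega) j)) 1 c) ∧
    (a ⟨n - 2, by omega⟩ = b → Scount q n (by omega) a 1 b = 0) ∧
    (a ⟨n - 1, by omega⟩ ≠ b → a ⟨n - 2, by omega⟩ ≠ b →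
      Scount q n (by omega) a 1 b = 1) ∧
    (Scount q 1 (by omega) (fun j => a (Fin.castLE (by omega) j)) 1 b =
      if a ⟨0, by omega⟩ = b then 0 else 1) := by
  have haHF : isHF a := (mem_HFset a).mp ha
  refine ⟨?_, ?_, ?_, ?_⟩
  · intro hb
    have fiber : ((HFset q (n - 1)).filter (fun z =>
          hammingDist (fun j => a (Fin.castLE (show n - 1 ≤ n by omega) j)) z = 1 ∧
          z ⟨n - 1 - 1, show n - 1 - 1 < n - 1 by omega⟩ ≠ b)).card
        = ∑ c ∈ Finset.univ.erase b,
            Scount q (n - 1) (by omega) (fun j => a (Fin.castLE (by omega) j)) 1 c := by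
      have hmem : ∀ z ∈ ((HFset q (n - 1)).filter (fun z =>
          hammingDist (fun j => a (Fin.castLE (show n - 1 ≤ n by omega) j)) z = 1 ∧
          z ⟨n - 1 - 1, show n - 1 - 1 < n - 1 by omega⟩ ≠ b)),
          z (⟨n - 1 - 1, show n - 1 - 1 < n - 1 by omega⟩ : Fin (n - 1)) ∈
            Finset.univ.erase b := by
        intro z hz
        rw [Finset.mem_filter] at hz
        exact Finset.mem_erase.mpr ⟨hz.2.2, Finset.mem_univ _⟩
      rw [Finset.card_eq_sum_card_fiberwise hmem]
      refine Finset.sum_congr rfl (fun c hc => ?_)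
      have hcb : c ≠ b := (Finset.mem_erase.mp hc).1
      show _ = ((HFset q (n - 1)).filter (fun z =>
          hammingDist (fun j => a (Fin.castLE (show n - 1 ≤ n by omega) j)) z = 1 ∧
          z ⟨n - 1 - 1, show n - 1 - 1 < n - 1 by omega⟩ = c)).card
      rw [Finset.filter_filter]
      apply congrArg
      apply Finset.filter_congr
      intro z _
      constructor
      · rintro ⟨⟨hd, _⟩, hlc⟩
        exact ⟨hd, hlc⟩
      · rintro ⟨hd, hlc⟩
        exact ⟨⟨hd, fun h => hcb (hlc.symm.trans h)⟩, hlc⟩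
    exact (prefix_bij q n hn a haHF b hb).trans fiber
  · intro h2
    rw [Scount, Finset.card_eq_zero, Finset.eq_empty_iff_forall_notMem]
    intro z hz
    rw [Finset.mem_filter, mem_HFset] at hz
    obtain ⟨hzHF, hd, hlast⟩ := hz
    rw [hd_one] at hd
    obtain ⟨i, hi, huniq⟩ := hd
    have hz2 : z ⟨n - 2, by omega⟩ ≠ b := by
      intro h
      exact isHF_ne hzHF (by omega) (by omega) (by omega) (h.trans hlast.symm)
    have e1 : (⟨n - 2, by omega⟩ : Fin n) = i := by
      by_contra hne
      exact hz2 (h2 ▸ (huniq _ hne).symm)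
    have e2 : (⟨n - 1, by omega⟩ : Fin n) = i := by
      by_contra hne
      have h : a ⟨n - 1, by omega⟩ = z ⟨n - 1, by omega⟩ := huniq _ hne
      have ha12 : a ⟨n - 2, by omega⟩ ≠ a ⟨n - 1, by omega⟩ :=
        isHF_ne haHF (by omega) (by omega) (by omega)
      exact ha12 (h2.trans (hlast.symm.trans h.symm))
    have e3 : n - 2 = n - 1 := congrArg Fin.val (e1.trans e2.symm)
    omega
  · intro h1 h2
    rw [Scount, Finset.card_eq_one]
    refine ⟨Function.update a ⟨n - 1, by omega⟩ b, ?_⟩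
    ext z
    rw [Finset.mem_filter, mem_HFset, Finset.mem_singleton]
    constructor
    · rintro ⟨hzHF, hd, hlast⟩
      rw [hd_one] at hd
      obtain ⟨i, hi, huniq⟩ := hd
      have hieq : i = ⟨n - 1, by omega⟩ := by
        by_contra hne
        have h : a ⟨n - 1, by omega⟩ = z ⟨n - 1, by omega⟩ :=
          huniq _ (fun hc => hne hc.symm)
        exact h1 (h.trans hlast)
      funext j
      by_cases hj : j = (⟨n - 1, by omega⟩ : Fin n)
      · rw [hj, Function.update_self]
        exact hj ▸ hlast
      · rw [Function.update_of_ne hj]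
        exact (huniq j (by rw [hieq]; exact hj)).symm
    · rintro rfl
      refine ⟨?_, ?_, ?_⟩
      · intro i hi
        by_cases hcase : i + 1 < n - 1
        · rw [Function.update_of_ne (by simp [Fin.ext_iff]; omega),
            Function.update_of_ne (by simp [Fin.ext_iff]; omega)]
          exact haHF i hi
        · -- i + 1 = n - 1 ∨ i + 1 = n... i+1 < n so i+1 ≤ n-1, hence i+1 = n-1
          have hieq : (⟨i + 1, hi⟩ : Fin n) = ⟨n - 1, by omega⟩ := by
            simp [Fin.ext_iff]; omega
          rw [hieq, Function.update_self,
            Function.update_of_ne (by simp [Fin.ext_iff]; omega)]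
          have : (⟨i, by omega⟩ : Fin n) = ⟨n - 2, by omega⟩ := by
            simp [Fin.ext_iff]; omega
          rw [this]
          exact h2
      · rw [hd_one]
        refine ⟨⟨n - 1, by omega⟩, ?_, ?_⟩
        · rw [Function.update_self]; exact h1
        · intro j hj
          rw [Function.update_of_ne hj]
      · exact Function.update_self _ _ _
  · rw [Scount]
    by_cases hab : a ⟨0, by omega⟩ = b
    · rw [if_pos hab, Finset.card_eq_zero, Finset.eq_empty_iff_forall_notMem]
      intro z hz
      rw [Finset.mem_filter, mem_HFset] at hz
      obtain ⟨hzHF, hd, hlast⟩ := hz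
      rw [hd_one] at hd
      obtain ⟨i, hi, _⟩ := hd
      have h0 : i = (⟨0, by omega⟩ : Fin 1) := Subsingleton.elim _ _
      rw [h0] at hi
      exact hi (hab.trans hlast.symm)
    · rw [if_neg hab, Finset.card_eq_one]
      refine ⟨fun _ => b, ?_⟩
      ext z
      rw [Finset.mem_filter, mem_HFset, Finset.mem_singleton]
      constructor
      · rintro ⟨hzHF, hd, hlast⟩
        funext j
        have : j = (⟨0, by omega⟩ : Fin 1) := Subsingleton.elim _ _
        rw [this]
        exact hlast
      · rintro rfl
        refine ⟨fun i h => by omega, ?_, rfl⟩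
        rw [hd_one]
        exact ⟨⟨0, by omega⟩, hab, fun j hj => absurd (Subsingleton.elim _ _) hj⟩
end

section
/- Let q ≥ 2 and n ≥ 1 be integers and let a = a_1 a_2 … a_n ∈ C_{q,n}. Then, as an equality of integers, |H_1(a)| = 2 + n(q−3) + T_2, where T_2 is the number of indices i with 1 ≤ i ≤ n−2 and a_i = a_{i+2}. -/
open scoped Classical

/-- The HF sphere `H_r(a)`: all HF sequences at Hamming distance exactly `r` from `a`. -/
noncomputable def HFsphere {q n : ℕ} (a : Fin n → Fin q) (r : ℕ) :
    Finset (Fin n → Fin q) :=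
  (HFset q n).filter (fun z => hammingDist a z = r)

/-- Indicator (in ℤ) of the event `a_i = a_{i+2}` (1-indexed), i.e. `t_i = τ^{(2)}`. -/
noncomputable def tval {q n : ℕ} (a : Fin n → Fin q) (i : ℕ) : ℤ :=
  if ∃ h : 1 ≤ i ∧ i + 1 < n, a ⟨i - 1, by omega⟩ = a ⟨i + 1, h.2⟩ then 1 else 0

section Aux

variable {q n : ℕ}

/-- congruence helper -/
lemma aeq (a : Fin n → Fin q) {j k : ℕ} (hj : j < n) (hk : k < n) (h : j = k) :
    a ⟨j, hj⟩ = a ⟨k, hk⟩ := by subst h; rfl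

/-- the set of symbols `c` that can replace `a i` while staying HF -/
noncomputable def goodSet (a : Fin n → Fin q) (i : Fin n) : Finset (Fin q) :=
  Finset.univ.filter (fun c => c ≠ a i ∧
    (∀ _ : 1 ≤ i.val, c ≠ a ⟨i.val - 1, lt_of_le_of_lt (Nat.sub_le _ _) i.isLt⟩) ∧
    (∀ h : i.val + 1 < n, c ≠ a ⟨i.val + 1, h⟩))

lemma mem_goodSet {a : Fin n → Fin q} {i : Fin n} {c : Fin q} :
    c ∈ goodSet a i ↔ c ≠ a i ∧
      (∀ _ : 1 ≤ i.val, c ≠ a ⟨i.val - 1, lt_of_le_of_lt (Nat.sub_le _ _) i.isLt⟩) ∧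
      (∀ h : i.val + 1 < n, c ≠ a ⟨i.val + 1, h⟩) := by
  simp [goodSet]

lemma mem_sphere_one {a : Fin n → Fin q} (ha : isHF a) {z : Fin n → Fin q} :
    z ∈ HFsphere a 1 ↔ ∃ i : Fin n, ∃ c ∈ goodSet a i, Function.update a i c = z := by
  constructor
  · intro hz
    simp only [HFsphere, HFset, Finset.mem_filter, Finset.mem_univ, true_and] at hz
    obtain ⟨hzHF, hd⟩ := hz
    have hd' : (Finset.univ.filter fun j => a j ≠ z j).card = 1 := hd
    obtain ⟨i, hi⟩ := Finset.card_eq_one.mp hd'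
    have hmem : ∀ j, a j ≠ z j ↔ j = i := fun j => by
      rw [← Finset.mem_singleton, ← hi]; simp
    have hne : a i ≠ z i := (hmem i).mpr rfl
    have heq : ∀ j, j ≠ i → a j = z j := fun j hj => by
      by_contra h; exact hj ((hmem j).mp h)
    refine ⟨i, z i, ?_, ?_⟩
    · rw [mem_goodSet]
      refine ⟨Ne.symm hne, ?_, ?_⟩
      · intro h1
        have h2 : (⟨i.val - 1, lt_of_le_of_lt (Nat.sub_le _ _) i.isLt⟩ : Fin n) ≠ i := by
          simp only [ne_eq, Fin.ext_iff]; omega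
        have h3 : i.val - 1 + 1 < n := by omega
        have h4 := hzHF (i.val - 1) h3
        have h5 : (⟨i.val - 1 + 1, h3⟩ : Fin n) = i := Fin.ext (by simp; omega)
        rw [h5] at h4
        rw [heq _ h2]
        exact fun hh => h4 hh.symm
      · intro h1
        have h2 : (⟨i.val + 1, h1⟩ : Fin n) ≠ i := by
          simp only [ne_eq, Fin.ext_iff]; omega
        have h4 := hzHF i.val h1
        have h5 : (⟨i.val, by omega⟩ : Fin n) = i := Fin.ext rfl
        rw [h5] at h4
        rw [heq _ h2]
        exact h4
    · funext j
      by_cases hj : j = i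
      · subst hj; simp
      · rw [Function.update_of_ne hj]; exact heq j hj
  · rintro ⟨i, c, hc, rfl⟩
    rw [mem_goodSet] at hc
    obtain ⟨hc1, hc2, hc3⟩ := hc
    simp only [HFsphere, HFset, Finset.mem_filter, Finset.mem_univ, true_and]
    constructor
    · intro j hj
      by_cases e1 : (⟨j, by omega⟩ : Fin n) = i
      · have hv : j = i.val := by rw [Fin.ext_iff] at e1; exact e1
        subst hv
        have e2 : (⟨i.val + 1, hj⟩ : Fin n) ≠ i := by
          simp only [ne_eq, Fin.ext_iff]; omega
        rw [e1, Function.update_self, Function.update_of_ne e2]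
        exact hc3 hj
      · by_cases e3 : (⟨j + 1, hj⟩ : Fin n) = i
        · have hv : j + 1 = i.val := by rw [Fin.ext_iff] at e3; exact e3
          rw [Function.update_of_ne e1, e3, Function.update_self]
          have h1 : 1 ≤ i.val := by omega
          have := hc2 h1
          rw [aeq a (lt_of_le_of_lt (Nat.sub_le _ _) i.isLt) (by omega : j < n)
            (by omega : i.val - 1 = j)] at this
          exact fun hh => this hh.symm
        · rw [Function.update_of_ne e1, Function.update_of_ne e3]
          exact ha j hj
    · have hfil : (Finset.univ.filter fun j => a j ≠ Function.update a i c j) = {i} := by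
        ext j
        simp only [Finset.mem_filter, Finset.mem_univ, true_and, Finset.mem_singleton]
        by_cases hj : j = i
        · subst hj; simp [Ne.symm hc1]
        · simp [Function.update_of_ne hj, hj]
      show (Finset.univ.filter fun j => a j ≠ Function.update a i c j).card = 1
      rw [hfil, Finset.card_singleton]

lemma sphere_card (a : Fin n → Fin q) (ha : isHF a) :
    (HFsphere a 1).card = ∑ i : Fin n, (goodSet a i).card := by
  have h1 : HFsphere a 1 = Finset.univ.biUnion
      (fun i => (goodSet a i).image (fun c => Function.update a i c)) := by
    ext z
    simp only [Finset.mem_biUnion, Finset.mem_univ, true_and, Finset.mem_image]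
    exact mem_sphere_one ha
  rw [h1, Finset.card_biUnion]
  · exact Finset.sum_congr rfl fun i _ =>
      Finset.card_image_of_injective _ (Function.update_injective a i)
  · intro i _ j _ hij
    simp only [Finset.disjoint_left, Finset.mem_image]
    rintro z ⟨c, hc, rfl⟩ ⟨c', hc', he⟩
    rw [mem_goodSet] at hc hc'
    have h2 := congrFun he j
    rw [Function.update_self, Function.update_of_ne (Ne.symm hij)] at h2
    exact hc'.1 h2

lemma goodSet_card (hq : 2 ≤ q) (a : Fin n → Fin q) (ha : isHF a) (i : Fin n) :
    ((goodSet a i).card : ℤ) = (q : ℤ) - 3 + (if i.val = 0 then 1 else 0)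
      + (if i.val = n - 1 then 1 else 0) + tval a i.val := by
  have hlt := i.isLt
  by_cases h0 : i.val = 0 <;> by_cases hl : i.val + 1 < n
  · -- left endpoint, n ≥ 2
    have hne : a i ≠ a ⟨i.val + 1, hl⟩ := by
      have := ha i.val hl
      rwa [show (⟨i.val, by omega⟩ : Fin n) = i from Fin.ext rfl] at this
    have hset : goodSet a i = ({a i, a ⟨i.val + 1, hl⟩} : Finset (Fin q))ᶜ := by
      ext c
      rw [mem_goodSet, Finset.mem_compl, Finset.mem_insert, Finset.mem_singleton]
      constructor
      · rintro ⟨h1, _, h3⟩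
        push_neg
        exact ⟨h1, h3 hl⟩
      · intro h
        push_neg at h
        exact ⟨h.1, fun hle => absurd hle (by omega), fun _ => h.2⟩
    have hcard : ({a i, a ⟨i.val + 1, hl⟩} : Finset (Fin q)).card = 2 := by
      rw [Finset.card_insert_of_notMem (by simp [hne]), Finset.card_singleton]
    rw [hset, Finset.card_compl, Fintype.card_fin, hcard]
    have ht : tval a i.val = 0 := by
      rw [tval, if_neg]; rintro ⟨⟨h1, _⟩, -⟩; omega
    rw [ht, if_pos h0, if_neg (by omega)]
    rw [Nat.cast_sub hq]; push_cast; ring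
  · -- n = 1
    have hn1 : n = 1 := by omega
    have hset : goodSet a i = ({a i} : Finset (Fin q))ᶜ := by
      ext c
      rw [mem_goodSet, Finset.mem_compl, Finset.mem_singleton]
      constructor
      · rintro ⟨ha1, _, _⟩; exact ha1
      · intro h
        exact ⟨h, fun hle => absurd hle (by omega), fun hlt' => absurd hlt' hl⟩
    rw [hset, Finset.card_compl, Fintype.card_fin, Finset.card_singleton]
    have ht : tval a i.val = 0 := by
      rw [tval, if_neg]; rintro ⟨⟨hh1, _⟩, -⟩; omega
    rw [ht, if_pos h0, if_pos (by omega)]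
    rw [Nat.cast_sub (by omega : 1 ≤ q)]; push_cast; ring
  · -- interior
    have h1 : 1 ≤ i.val := by omega
    set x := a ⟨i.val - 1, lt_of_le_of_lt (Nat.sub_le _ _) i.isLt⟩ with hx
    set y := a ⟨i.val + 1, hl⟩ with hy
    have hp : i.val - 1 + 1 < n := by omega
    have hxa : x ≠ a i := by
      have := ha (i.val - 1) hp
      rwa [show (⟨i.val - 1 + 1, hp⟩ : Fin n) = i from Fin.ext (by simp; omega)] at this
    have hay : a i ≠ y := by
      have := ha i.val hl
      rwa [show (⟨i.val, by omega⟩ : Fin n) = i from Fin.ext rfl] at this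
    have hset : goodSet a i = ({a i, x, y} : Finset (Fin q))ᶜ := by
      ext c
      rw [mem_goodSet, Finset.mem_compl, Finset.mem_insert, Finset.mem_insert,
        Finset.mem_singleton]
      constructor
      · rintro ⟨ha1, ha2, ha3⟩
        push_neg
        exact ⟨ha1, ha2 h1, ha3 hl⟩
      · intro h
        push_neg at h
        exact ⟨h.1, fun _ => h.2.1, fun _ => h.2.2⟩
    rw [hset, Finset.card_compl, Fintype.card_fin]
    rw [if_neg h0, if_neg (by omega)]
    by_cases hxy : x = y
    · have ht : tval a i.val = 1 := by
        rw [tval, if_pos]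
        exact ⟨⟨h1, hl⟩, hxy⟩
      have hcard : ({a i, x, y} : Finset (Fin q)).card = 2 := by
        rw [← hxy, Finset.pair_eq_singleton,
          Finset.card_insert_of_notMem (by simp [Ne.symm hxa]), Finset.card_singleton]
      rw [ht, hcard, Nat.cast_sub hq]; push_cast; ring
    · have ht : tval a i.val = 0 := by
        rw [tval, if_neg]; rintro ⟨hh, heqq⟩; exact hxy heqq
      have hcard : ({a i, x, y} : Finset (Fin q)).card = 3 := by
        rw [Finset.card_insert_of_notMem (by simp [Ne.symm hxa, hay]),
          Finset.card_insert_of_notMem (by simp [hxy]), Finset.card_singleton]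
      have hq3 : 3 ≤ q := by
        have := Finset.card_le_univ ({a i, x, y} : Finset (Fin q))
        rw [hcard] at this
        simpa using this
      rw [ht, hcard, Nat.cast_sub hq3]; push_cast; ring
  · -- right endpoint
    have h1 : 1 ≤ i.val := by omega
    have hp : i.val - 1 + 1 < n := by omega
    have hne : a ⟨i.val - 1, lt_of_le_of_lt (Nat.sub_le _ _) i.isLt⟩ ≠ a i := by
      have := ha (i.val - 1) hp
      rwa [show (⟨i.val - 1 + 1, hp⟩ : Fin n) = i from Fin.ext (by simp; omega)] at this
    have hset : goodSet a i =
        ({a i, a ⟨i.val - 1, lt_of_le_of_lt (Nat.sub_le _ _) i.isLt⟩} : Finset (Fin q))ᶜ := by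
      ext c
      rw [mem_goodSet, Finset.mem_compl, Finset.mem_insert, Finset.mem_singleton]
      constructor
      · rintro ⟨ha1, ha2, _⟩
        push_neg
        exact ⟨ha1, ha2 h1⟩
      · intro h
        push_neg at h
        exact ⟨h.1, fun _ => h.2, fun hlt' => absurd hlt' hl⟩
    have hcard : ({a i, a ⟨i.val - 1, lt_of_le_of_lt (Nat.sub_le _ _) i.isLt⟩} :
        Finset (Fin q)).card = 2 := by
      rw [Finset.card_insert_of_notMem (by simp [Ne.symm hne]), Finset.card_singleton]
    rw [hset, Finset.card_compl, Fintype.card_fin, hcard]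
    have ht : tval a i.val = 0 := by
      rw [tval, if_neg]; rintro ⟨⟨_, h2⟩, -⟩; omega
    rw [ht, if_neg (by omega), if_pos (by omega)]
    rw [Nat.cast_sub hq]; push_cast; ring

end Aux

theorem stmt_5 (q n : ℕ) (hq : 2 ≤ q) (hn : 1 ≤ n)
    (a : Fin n → Fin q) (ha : a ∈ HFset q n) :
    ((HFsphere a 1).card : ℤ) =
      2 + (n : ℤ) * ((q : ℤ) - 3) + ∑ i ∈ Finset.Icc 1 (n - 2), tval a i := by
  have haHF : isHF a := by simpa [HFset] using ha
  rw [sphere_card a haHF, Nat.cast_sum]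
  rw [Finset.sum_congr rfl (fun i _ => goodSet_card hq a haHF i)]
  have e1 : ∑ i : Fin n, (if i.val = 0 then (1 : ℤ) else 0) = 1 := by
    have : ∀ i : Fin n, (if i.val = 0 then (1 : ℤ) else 0)
        = (if i = (⟨0, by omega⟩ : Fin n) then (1 : ℤ) else 0) := by
      intro i; simp [Fin.ext_iff]
    rw [Finset.sum_congr rfl (fun i _ => this i), Finset.sum_ite_eq']
    simp
  have e2 : ∑ i : Fin n, (if i.val = n - 1 then (1 : ℤ) else 0) = 1 := by
    have : ∀ i : Fin n, (if i.val = n - 1 then (1 : ℤ) else 0)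
        = (if i = (⟨n - 1, by omega⟩ : Fin n) then (1 : ℤ) else 0) := by
      intro i; simp [Fin.ext_iff]
    rw [Finset.sum_congr rfl (fun i _ => this i), Finset.sum_ite_eq']
    simp
  have e3 : ∑ i : Fin n, tval a i.val = ∑ i ∈ Finset.Icc 1 (n - 2), tval a i := by
    rw [Fin.sum_univ_eq_sum_range (fun i => tval a i) n]
    refine (Finset.sum_subset ?_ ?_).symm
    · intro i hi
      simp only [Finset.mem_Icc] at hi
      simp only [Finset.mem_range]
      omega
    · intro i _ hi
      simp only [Finset.mem_Icc, not_and, not_le] at hi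
      rw [tval, if_neg]
      rintro ⟨⟨hh1, hh2⟩, -⟩
      have := hi hh1
      omega
  simp only [Finset.sum_add_distrib, e1, e2, e3, Finset.sum_const, Finset.card_univ,
    Fintype.card_fin, nsmul_eq_mul]
  ring
end

section
/- Let q ≥ 2 and n ≥ 3 be integers and let a = a_1 a_2 … a_n ∈ C_{q,n}. For 1 ≤ i ≤ n−2 set t_i = 1 if a_i = a_{i+2} and t_i = 0 otherwise, and for 1 ≤ i ≤ n−3 set s_i = 1 if a_i = a_{i+3} and s_i = 0 otherwise. Then, as an equality of integers, |H_2(a)| = 3(q−2)^2 + 2 + (n−3)·((q−2)(q−3)+2) − 2·Σ_{i=1}^{n−2} t_i − Σ_{i=1}^{n−3} s_i + (q−2)·( Σ_{i=2}^{n−2} (q−3+t_i) + Σ_{i=1}^{n−3} (q−3+t_i) ) + Σ_{i=1}^{n−4} ( (q−3+t_i) · Σ_{j=i+2}^{n−2} (q−3+t_j) ). -/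
open scoped Classical

/-- Indicator (in ℤ) of the event `a_i = a_{i+3}` (1-indexed): `s_i`. -/
noncomputable def sval {q n : ℕ} (a : Fin n → Fin q) (i : ℕ) : ℤ :=
  if ∃ h : 1 ≤ i ∧ i + 2 < n, a ⟨i - 1, by omega⟩ = a ⟨i + 2, h.2⟩ then 1 else 0

/-! A word at Hamming distance 2 from `a` is obtained by replacing two letters `a_i, a_j`,
`i < j`, by new letters `x, y`. If `j ≥ i + 2` the two choices are independent: `x` has to avoid
the letters of `a` at positions `i - 1, i, i + 1`, which leaves `q - 2` letters at the ends and
`q - 3 + t_i` inside (the three letters are distinct unless `a_{i-1} = a_{i+1}`). If `j = i + 1`,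
`x` avoids `{a_{i-1}, a_i}`, `y` avoids `{a_{i+1}, a_{i+2}}` and `x ≠ y`; these pairs number
`|X| |Y| - |X ∩ Y|`, and `X ∩ Y` consists of the letters avoiding the window `a_{i-1} … a_{i+2}`,
in which an HF word can only repeat a letter as `a_{i-1} = a_{i+1}`, `a_i = a_{i+2}` or
`a_{i-1} = a_{i+2}`, whence `|X ∩ Y| = q - 4 + t_i + t_{i+1} + s_i`. Summing over the pairs
`i < j` gives the formula. -/

theorem Finset.card_filter_ne_product {α : Type*} [DecidableEq α] (X Y : Finset α) :
    (((X ×ˢ Y).filter fun p => p.1 ≠ p.2).card : ℤ) = X.card * Y.card - (X ∩ Y).card := by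
  have hdiag : (X ×ˢ Y).filter (fun p => p.1 = p.2) = (X ∩ Y).diag := by
    ext ⟨x, y⟩
    simp only [Finset.mem_filter, Finset.mem_product, Finset.mem_diag, Finset.mem_inter]
    grind
  have h := Finset.card_filter_add_card_filter_not (s := X ×ˢ Y) (fun p => p.1 = p.2)
  rw [hdiag, Finset.diag_card, Finset.card_product] at h
  have h' := congrArg (Nat.cast : ℕ → ℤ) h
  push_cast at h'
  simp only [ne_eq]
  linarith

theorem Finset.card_triple {α : Type*} [DecidableEq α] {u v w : α} (huv : u ≠ v)
    (hvw : v ≠ w) : (({u, v, w} : Finset α).card : ℤ) = 3 - if u = w then 1 else 0 := by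
  by_cases h : u = w
  · subst h
    simp [Finset.card_pair hvw]
  · simp [h, huv, hvw, Finset.card_insert_of_notMem]

theorem Finset.card_quadruple {α : Type*} [DecidableEq α] {u v w z : α} (huv : u ≠ v)
    (hvw : v ≠ w) (hwz : w ≠ z) :
    (({u, v, w, z} : Finset α).card : ℤ) =
      4 - (if u = w then 1 else 0) - (if v = z then 1 else 0) - (if u = z then 1 else 0) := by
  by_cases h1 : u = w <;> by_cases h2 : v = z <;> by_cases h3 : u = z <;>
    simp_all [Finset.card_insert_of_notMem]

theorem sum_range_add_two {M : Type*} [AddCommMonoid M] (f : ℕ → M) (N : ℕ) :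
    ∑ i ∈ Finset.range (N + 2), f i = f 0 + ∑ i ∈ Finset.Icc 1 N, f i + f (N + 1) := by
  rw [Finset.sum_range_succ, Finset.range_eq_Ico, Finset.sum_eq_sum_Ico_succ_bot (by omega),
    Finset.Ico_add_one_right_eq_Icc]

theorem sum_Icc_ite_le {M : Type*} [AddCommMonoid M] (f : ℕ → M) {a k : ℕ} (b : ℕ)
    (h : a ≤ k) :
    ∑ j ∈ Finset.Icc a b, (if k ≤ j then f j else 0) = ∑ j ∈ Finset.Icc k b, f j := by
  rw [← Finset.sum_filter]
  congr 1
  ext j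
  simp only [Finset.mem_filter, Finset.mem_Icc]
  omega

theorem sum_sum_ite_add_two_le {R : Type*} [CommSemiring R] (c : ℕ → R) (m : ℕ) :
    ∑ i ∈ Finset.range (m + 3), ∑ j ∈ Finset.range (m + 3),
        (if i + 2 ≤ j then c i * c j else 0) =
      c 0 * c (m + 2) + c 0 * ∑ j ∈ Finset.Icc 2 (m + 1), c j +
        c (m + 2) * ∑ i ∈ Finset.Icc 1 m, c i +
        ∑ i ∈ Finset.Icc 1 (m - 1), c i * ∑ j ∈ Finset.Icc (i + 2) (m + 1), c j := by
  have hrow : ∀ i, ∑ j ∈ Finset.Icc 1 (m + 1), (if i + 2 ≤ j then c i * c j else 0) =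
      c i * ∑ j ∈ Finset.Icc (i + 2) (m + 1), c j := fun i => by
    rw [sum_Icc_ite_le _ _ (by omega), Finset.mul_sum]
  have hcol : ∑ i ∈ Finset.Icc 1 (m + 1), (if i + 2 ≤ m + 2 then c i * c (m + 2) else 0) =
      c (m + 2) * ∑ i ∈ Finset.Icc 1 m, c i := by
    rw [← Finset.sum_filter, Finset.mul_sum]
    refine Finset.sum_congr (by ext j; simp only [Finset.mem_filter, Finset.mem_Icc]; omega)
      fun _ _ => mul_comm _ _
  have hinner : ∑ i ∈ Finset.Icc 1 (m + 1), c i * ∑ j ∈ Finset.Icc (i + 2) (m + 1), c j =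
      ∑ i ∈ Finset.Icc 1 (m - 1), c i * ∑ j ∈ Finset.Icc (i + 2) (m + 1), c j := by
    refine (Finset.sum_subset (Finset.Icc_subset_Icc le_rfl (by omega)) fun i hi hi' => ?_).symm
    simp only [Finset.mem_Icc] at hi hi'
    rw [Finset.Icc_eq_empty (by omega), Finset.sum_empty, mul_zero]
  rw [show m + 3 = m + 1 + 2 from rfl]
  simp only [sum_range_add_two, Finset.sum_add_distrib, hrow, hcol, hinner]
  norm_num
  ring

section HF

variable {q n : ℕ}

theorem isHF_iff {a : Fin n → Fin q} :
    isHF a ↔ ∀ k l : Fin n, (k : ℕ) + 1 = l → a k ≠ a l := by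
  constructor
  · rintro h k ⟨l, hl⟩ rfl
    exact h k hl
  · intro h i hi
    exact h _ _ rfl

theorem isHF.apply_ne {a : Fin n → Fin q} (ha : isHF a) {k l : Fin n} (h : (k : ℕ) + 1 = l) :
    a k ≠ a l :=
  isHF_iff.mp ha k l h

theorem tval_eq_ite (a : Fin n → Fin q) {i : ℕ} {k l : Fin n} (hk : (k : ℕ) + 1 = i)
    (hl : (l : ℕ) = i + 1) : tval a i = if a k = a l then 1 else 0 := by
  obtain ⟨k, _⟩ := k
  obtain ⟨l, hl'⟩ := l
  simp only at hk hl
  subst hk hl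
  simp [tval, hl']

theorem sval_eq_ite (a : Fin n → Fin q) {i : ℕ} {k l : Fin n} (hk : (k : ℕ) + 1 = i)
    (hl : (l : ℕ) = i + 2) : sval a i = if a k = a l then 1 else 0 := by
  obtain ⟨k, _⟩ := k
  obtain ⟨l, hl'⟩ := l
  simp only at hk hl
  subst hk hl
  simp [sval, hl']

/-- The window `[s, t]` is clipped to the positions of the word; note `avoid a (0 - 1) t =
avoid a 0 t`. -/
noncomputable def avoid (a : Fin n → Fin q) (s t : ℕ) : Finset (Fin q) :=
  Finset.univ.filter fun x => ∀ l : Fin n, s ≤ l → l ≤ t → a l ≠ x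

theorem avoid_of_le (a : Fin n → Fin q) {s t : ℕ} (ht : n ≤ t + 1) :
    avoid a s (t + 1) = avoid a s t := by
  ext x
  simp only [avoid, Finset.mem_filter, Finset.mem_univ, true_and]
  grind

theorem avoid_inter_avoid (a : Fin n → Fin q) {s t u : ℕ} (hst : s ≤ t + 1) (htu : t ≤ u) :
    avoid a s t ∩ avoid a (t + 1) u = avoid a s u := by
  ext x
  simp only [avoid, Finset.mem_inter, Finset.mem_filter, Finset.mem_univ, true_and]
  grind

theorem avoid_eq_compl_image (a : Fin n → Fin q) {s t : ℕ} {W : Finset (Fin n)}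
    (hW : ∀ l : Fin n, l ∈ W ↔ s ≤ l ∧ l ≤ t) : avoid a s t = (W.image a)ᶜ := by
  ext x
  simp only [avoid, Finset.mem_filter, Finset.mem_univ, true_and, Finset.mem_compl,
    Finset.mem_image, hW, not_exists, not_and]
  grind

theorem card_avoid_eq (a : Fin n → Fin q) {s t : ℕ} {W : Finset (Fin n)}
    (hW : ∀ l : Fin n, l ∈ W ↔ s ≤ l ∧ l ≤ t) :
    ((avoid a s t).card : ℤ) = q - (W.image a).card := by
  rw [avoid_eq_compl_image a hW, Finset.card_compl, Fintype.card_fin,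
    Nat.cast_sub ((Finset.card_le_univ _).trans_eq (Fintype.card_fin q))]

theorem card_avoid_single (a : Fin n → Fin q) {k : ℕ} (hk : k < n) :
    ((avoid a k k).card : ℤ) = q - 1 := by
  rw [card_avoid_eq a (W := {⟨k, hk⟩}) (by simp [Fin.ext_iff]; omega)]
  simp

variable {a : Fin n → Fin q}

theorem card_avoid_pair (ha : isHF a) {k l : ℕ} (hkl : k + 1 = l) (hl : l < n) :
    ((avoid a k l).card : ℤ) = q - 2 := by
  subst hkl
  rw [card_avoid_eq a (W := {⟨k, by omega⟩, ⟨k + 1, hl⟩}) (by simp [Fin.ext_iff]; omega)]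
  simp [Finset.card_pair (ha k hl)]

theorem card_avoid_triple (ha : isHF a) {k : ℕ} (hk0 : 1 ≤ k) (hk : k + 1 < n) :
    ((avoid a (k - 1) (k + 1)).card : ℤ) = q - 3 + tval a k := by
  rw [card_avoid_eq a (W := {⟨k - 1, by omega⟩, ⟨k, by omega⟩, ⟨k + 1, hk⟩})
      (by simp [Fin.ext_iff]; omega),
    tval_eq_ite a (k := ⟨k - 1, by omega⟩) (l := ⟨k + 1, hk⟩) (by simp; omega) rfl]
  simp only [Finset.image_insert, Finset.image_singleton]
  rw [Finset.card_triple (ha.apply_ne (by simp; omega)) (ha.apply_ne rfl)]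
  ring

theorem card_avoid_quadruple (ha : isHF a) {k : ℕ} (hk0 : 1 ≤ k) (hk : k + 2 < n) :
    ((avoid a (k - 1) (k + 2)).card : ℤ) = q - 4 + tval a k + tval a (k + 1) + sval a k := by
  rw [card_avoid_eq a
      (W := {⟨k - 1, by omega⟩, ⟨k, by omega⟩, ⟨k + 1, by omega⟩, ⟨k + 2, hk⟩})
      (by simp [Fin.ext_iff]; omega),
    tval_eq_ite a (k := ⟨k - 1, by omega⟩) (l := ⟨k + 1, by omega⟩) (by simp; omega) rfl,
    tval_eq_ite a (k := ⟨k, by omega⟩) (l := ⟨k + 2, hk⟩) rfl rfl,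
    sval_eq_ite a (k := ⟨k - 1, by omega⟩) (l := ⟨k + 2, hk⟩) (by simp; omega) rfl]
  simp only [Finset.image_insert, Finset.image_singleton]
  rw [Finset.card_quadruple (ha.apply_ne (by simp; omega)) (ha.apply_ne rfl) (ha.apply_ne rfl)]
  ring

theorem isHF_update_update_iff_of_add_two_le (ha : isHF a) {i j : Fin n}
    (hij : (i : ℕ) + 2 ≤ j) (x y : Fin q) :
    (x ≠ a i ∧ y ≠ a j ∧ isHF (Function.update (Function.update a i x) j y)) ↔
      x ∈ avoid a (i - 1) (i + 1) ∧ y ∈ avoid a (j - 1) (j + 1) := by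
  rw [isHF_iff] at ha ⊢
  simp only [avoid, Finset.mem_filter, Finset.mem_univ, true_and, Function.update_apply]
  constructor
  · rintro ⟨hx, hy, hz⟩
    constructor
    · intro l h1 h2
      have := hz l i
      have := hz i l
      grind
    · intro l h1 h2
      have := hz l j
      have := hz j l
      grind
  · rintro ⟨hx, hy⟩
    refine ⟨(hx i (by omega) (by omega)).symm, (hy j (by omega) (by omega)).symm,
      fun k l hkl => ?_⟩
    have := hx k
    have := hx l
    have := hy k
    have := hy l
    have := ha k l hkl
    grind

theorem isHF_update_update_iff_of_add_one_eq (ha : isHF a) {i j : Fin n}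
    (hij : (i : ℕ) + 1 = j) (x y : Fin q) :
    (x ≠ a i ∧ y ≠ a j ∧ isHF (Function.update (Function.update a i x) j y)) ↔
      x ∈ avoid a (i - 1) i ∧ y ∈ avoid a (i + 1) (i + 2) ∧ x ≠ y := by
  rw [isHF_iff] at ha ⊢
  simp only [avoid, Finset.mem_filter, Finset.mem_univ, true_and, Function.update_apply]
  constructor
  · rintro ⟨hx, hy, hz⟩
    refine ⟨fun l h1 h2 => ?_, fun l h1 h2 => ?_, ?_⟩
    · have := hz l i
      grind
    · have := hz j l
      grind
    · have := hz i j hij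
      grind
  · rintro ⟨hx, hy, hxy⟩
    refine ⟨(hx i (by omega) le_rfl).symm, (hy j (by omega) (by omega)).symm, fun k l hkl => ?_⟩
    have := hx k
    have := hy l
    have := ha k l hkl
    grind

end HF

section Sphere

variable {q n : ℕ}

theorem mem_HFsphere {a z : Fin n → Fin q} {r : ℕ} :
    z ∈ HFsphere a r ↔ isHF z ∧ hammingDist a z = r := by
  simp [HFsphere, HFset]

theorem filter_ne_update_update (a : Fin n → Fin q) {i j : Fin n} (hij : i ≠ j) {x y : Fin q}
    (hx : x ≠ a i) (hy : y ≠ a j) :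
    Finset.univ.filter (fun k => a k ≠ Function.update (Function.update a i x) j y k) =
      {i, j} := by
  ext k
  by_cases hkj : k = j
  · subst hkj
    simp [hy.symm]
  · by_cases hki : k = i
    · subst hki
      simp [hkj, hx.symm]
    · simp [hkj, hki]

theorem hammingDist_update_update (a : Fin n → Fin q) {i j : Fin n} (hij : i ≠ j) {x y : Fin q}
    (hx : x ≠ a i) (hy : y ≠ a j) :
    hammingDist a (Function.update (Function.update a i x) j y) = 2 := by
  rw [hammingDist, filter_ne_update_update a hij hx hy, Finset.card_pair hij]

theorem eq_of_update_update_eq {a : Fin n → Fin q} {i j i' j' : Fin n} {x y x' y' : Fin q}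
    (hij : i < j) (hij' : i' < j') (hx : x ≠ a i) (hy : y ≠ a j) (hx' : x' ≠ a i')
    (hy' : y' ≠ a j')
    (he : Function.update (Function.update a i x) j y =
      Function.update (Function.update a i' x') j' y') :
    i = i' ∧ j = j' ∧ x = x' ∧ y = y' := by
  have hD := filter_ne_update_update a hij.ne hx hy
  rw [he, filter_ne_update_update a hij'.ne hx' hy'] at hD
  have hD' := congrArg (fun s : Finset (Fin n) => (s : Set (Fin n))) hD
  simp only [Finset.coe_pair, Set.pair_eq_pair_iff] at hD'
  obtain ⟨rfl, rfl⟩ : i = i' ∧ j = j' := by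
    rcases hD' with h | ⟨rfl, rfl⟩
    · exact ⟨h.1.symm, h.2.symm⟩
    · exact absurd (hij.trans hij') (lt_irrefl _)
  have hxx := congrFun he i
  have hyy := congrFun he j
  simp only [Function.update_self, Function.update_of_ne hij.ne] at hxx hyy
  exact ⟨rfl, rfl, hxx, hyy⟩

theorem exists_update_update_eq {a z : Fin n → Fin q} (hz : hammingDist a z = 2) :
    ∃ i j, i < j ∧ z i ≠ a i ∧ z j ≠ a j ∧
      Function.update (Function.update a i (z i)) j (z j) = z := by
  obtain ⟨u, v, huv, hD⟩ := Finset.card_eq_two.mp hz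
  wlog h : u < v generalizing u v
  · exact this v u huv.symm (hD.trans (Finset.pair_comm u v)) (huv.lt_or_gt.resolve_left h)
  have hmem : ∀ k, a k ≠ z k ↔ k = u ∨ k = v := fun k => by
    simpa using congrArg (k ∈ ·) hD
  refine ⟨u, v, h, fun e => (hmem u).mpr (.inl rfl) e.symm,
    fun e => (hmem v).mpr (.inr rfl) e.symm, funext fun k => ?_⟩
  by_cases hkv : k = v
  · subst hkv
    simp
  · by_cases hku : k = u
    · subst hku
      simp [hkv]
    · simp only [Function.update_of_ne hkv, Function.update_of_ne hku]
      by_contra hk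
      exact (hmem k).mp hk |>.elim hku hkv

noncomputable def replacements (a : Fin n → Fin q) (i j : Fin n) : Finset (Fin q × Fin q) :=
  Finset.univ.filter fun p =>
    p.1 ≠ a i ∧ p.2 ≠ a j ∧ isHF (Function.update (Function.update a i p.1) j p.2)

theorem card_HFsphere_two (a : Fin n → Fin q) :
    (HFsphere a 2).card =
      ∑ p ∈ Finset.univ.filter (fun p : Fin n × Fin n => p.1 < p.2),
        (replacements a p.1 p.2).card := by
  rw [← Finset.card_sigma]
  symm
  refine Finset.card_bij (fun w _ => Function.update (Function.update a w.1.1 w.2.1) w.1.2 w.2.2)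
    ?_ ?_ ?_
  · rintro ⟨⟨i, j⟩, ⟨x, y⟩⟩ hw
    simp only [Finset.mem_sigma, Finset.mem_filter, Finset.mem_univ, true_and,
      replacements] at hw
    exact mem_HFsphere.mpr ⟨hw.2.2.2, hammingDist_update_update a hw.1.ne hw.2.1 hw.2.2.1⟩
  · rintro ⟨⟨i, j⟩, ⟨x, y⟩⟩ hw ⟨⟨i', j'⟩, ⟨x', y'⟩⟩ hw' he
    simp only [Finset.mem_sigma, Finset.mem_filter, Finset.mem_univ, true_and,
      replacements] at hw hw'
    obtain ⟨rfl, rfl, rfl, rfl⟩ :=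
      eq_of_update_update_eq hw.1 hw'.1 hw.2.1 hw.2.2.1 hw'.2.1 hw'.2.2.1 he
    rfl
  · intro z hz
    obtain ⟨hzHF, hzd⟩ := mem_HFsphere.mp hz
    obtain ⟨i, j, hij, hi, hj, he⟩ := exists_update_update_eq hzd
    refine ⟨⟨(i, j), (z i, z j)⟩, ?_, he⟩
    simp only [Finset.mem_sigma, Finset.mem_filter, Finset.mem_univ, true_and, replacements]
    exact ⟨hij, hi, hj, by rwa [he]⟩

end Sphere

section Counts

variable {q n : ℕ} {a : Fin n → Fin q}

noncomputable def substCount (a : Fin n → Fin q) (k : ℕ) : ℤ :=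
  (avoid a (k - 1) (k + 1)).card

noncomputable def pairSubstCount (a : Fin n → Fin q) (i : ℕ) : ℤ :=
  (avoid a (i - 1) i).card * (avoid a (i + 1) (i + 2)).card - (avoid a (i - 1) (i + 2)).card

theorem card_replacements_of_add_two_le (ha : isHF a) {i j : Fin n} (hij : (i : ℕ) + 2 ≤ j) :
    ((replacements a i j).card : ℤ) = substCount a i * substCount a j := by
  have : replacements a i j = avoid a (i - 1) (i + 1) ×ˢ avoid a (j - 1) (j + 1) := by
    ext ⟨x, y⟩
    simp only [replacements, Finset.mem_filter, Finset.mem_product, Finset.mem_univ, true_and,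
      isHF_update_update_iff_of_add_two_le ha hij]
  rw [this, Finset.card_product, substCount, substCount, Nat.cast_mul]

theorem card_replacements_of_add_one_eq (ha : isHF a) {i j : Fin n} (hij : (i : ℕ) + 1 = j) :
    ((replacements a i j).card : ℤ) = pairSubstCount a i := by
  have : replacements a i j =
      (avoid a (i - 1) i ×ˢ avoid a (i + 1) (i + 2)).filter fun p => p.1 ≠ p.2 := by
    ext ⟨x, y⟩
    simp only [replacements, Finset.mem_filter, Finset.mem_product, Finset.mem_univ, true_and,
      isHF_update_update_iff_of_add_one_eq ha hij, and_assoc]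
  rw [this, Finset.card_filter_ne_product, avoid_inter_avoid a (by omega) (by omega),
    pairSubstCount]

theorem card_HFsphere_two_eq_sum (ha : isHF a) :
    ((HFsphere a 2).card : ℤ) =
      ∑ i ∈ Finset.range (n - 1), pairSubstCount a i +
        ∑ i ∈ Finset.range n, ∑ j ∈ Finset.range n,
          if i + 2 ≤ j then substCount a i * substCount a j else 0 := by
  have hterm : ∀ i j : Fin n, (if i < j then ((replacements a i j).card : ℤ) else 0) =
      (if (j : ℕ) = i + 1 then pairSubstCount a i else 0) +
        if (i : ℕ) + 2 ≤ j then substCount a i * substCount a j else 0 := by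
    intro i j
    by_cases hadj : (j : ℕ) = i + 1
    · rw [if_pos (Fin.lt_def.mpr (by omega)), card_replacements_of_add_one_eq ha hadj.symm,
        if_pos hadj, if_neg (by omega), add_zero]
    · by_cases hfar : (i : ℕ) + 2 ≤ j
      · rw [if_pos (Fin.lt_def.mpr (by omega)), card_replacements_of_add_two_le ha hfar,
          if_neg hadj, if_pos hfar, zero_add]
      · rw [if_neg (by rw [Fin.lt_def]; omega), if_neg hadj, if_neg hfar, add_zero]
  have hadj : ∀ i : ℕ, ∑ j : Fin n, (if (j : ℕ) = i + 1 then pairSubstCount a i else 0) =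
      if i + 1 ∈ Finset.range n then pairSubstCount a i else 0 := fun i => by
    rw [Fin.sum_univ_eq_sum_range (fun j => if j = i + 1 then pairSubstCount a i else 0),
      Finset.sum_ite_eq']
  have hfar : ∀ i : ℕ, ∑ j : Fin n, (if i + 2 ≤ (j : ℕ) then substCount a i * substCount a j
      else 0) = ∑ j ∈ Finset.range n, if i + 2 ≤ j then substCount a i * substCount a j else 0 :=
    fun i => Fin.sum_univ_eq_sum_range
      (fun j => if i + 2 ≤ j then substCount a i * substCount a j else 0) n
  have hrange : (Finset.range n).filter (fun i => i + 1 ∈ Finset.range n) =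
      Finset.range (n - 1) := by
    ext i
    simp only [Finset.mem_filter, Finset.mem_range]
    omega
  rw [card_HFsphere_two, Nat.cast_sum, Finset.sum_filter, Fintype.sum_prod_type]
  simp only [hterm, Finset.sum_add_distrib, hadj, hfar]
  rw [Fin.sum_univ_eq_sum_range
      (fun i => if i + 1 ∈ Finset.range n then pairSubstCount a i else 0),
    Fin.sum_univ_eq_sum_range (fun i => ∑ j ∈ Finset.range n,
      if i + 2 ≤ j then substCount a i * substCount a j else 0),
    ← Finset.sum_filter, hrange]

theorem substCount_zero (ha : isHF a) (hn : 2 ≤ n) : substCount a 0 = q - 2 :=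
  card_avoid_pair ha rfl (by omega)

theorem substCount_of_add_one_eq (ha : isHF a) (hn : 2 ≤ n) {k : ℕ} (hk : k + 1 = n) :
    substCount a k = q - 2 := by
  rw [substCount, avoid_of_le a (by omega)]
  exact card_avoid_pair ha (by omega) (by omega)

theorem substCount_of_lt (ha : isHF a) {k : ℕ} (hk0 : 1 ≤ k) (hk : k + 1 < n) :
    substCount a k = q - 3 + tval a k :=
  card_avoid_triple ha hk0 hk

theorem pairSubstCount_zero (ha : isHF a) (hn : 3 ≤ n) :
    pairSubstCount a 0 = (q - 1) * (q - 2) - (q - 3 + tval a 1) := by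
  rw [pairSubstCount, card_avoid_single a (by omega), card_avoid_pair ha rfl (by omega),
    ← card_avoid_triple ha le_rfl (by omega)]

theorem pairSubstCount_of_add_two_eq (ha : isHF a) {i : ℕ} (hi0 : 1 ≤ i) (hi : i + 2 = n) :
    pairSubstCount a i = (q - 2) * (q - 1) - (q - 3 + tval a i) := by
  rw [pairSubstCount, card_avoid_pair ha (by omega) (by omega), avoid_of_le a (by omega),
    card_avoid_single a (by omega), avoid_of_le a (by omega), card_avoid_triple ha hi0 (by omega)]

theorem pairSubstCount_of_lt (ha : isHF a) {i : ℕ} (hi0 : 1 ≤ i) (hi : i + 2 < n) :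
    pairSubstCount a i = (q - 2) ^ 2 - (q - 4 + tval a i + tval a (i + 1) + sval a i) := by
  rw [pairSubstCount, card_avoid_pair ha (by omega) (by omega), card_avoid_pair ha rfl hi,
    card_avoid_quadruple ha hi0 hi]
  ring

end Counts

section Sums

variable {q m : ℕ} {a : Fin (m + 3) → Fin q}

theorem sum_pairSubstCount (ha : isHF a) :
    ∑ i ∈ Finset.range (m + 2), pairSubstCount a i =
      2 * ((q : ℤ) - 2) ^ 2 + 2 + m * ((q - 2) * (q - 3) + 2) -
        2 * ∑ i ∈ Finset.Icc 1 (m + 1), tval a i - ∑ i ∈ Finset.Icc 1 m, sval a i := by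
  have hmid : ∑ i ∈ Finset.Icc 1 m, pairSubstCount a i =
      m * ((q - 2) * (q - 3) + 2) - ∑ i ∈ Finset.Icc 1 m, tval a i -
        ∑ i ∈ Finset.Icc 1 m, tval a (i + 1) - ∑ i ∈ Finset.Icc 1 m, sval a i := by
    rw [Finset.sum_congr rfl fun i hi => pairSubstCount_of_lt ha (Finset.mem_Icc.mp hi).1
      (by have := (Finset.mem_Icc.mp hi).2; omega)]
    simp only [Finset.sum_sub_distrib, Finset.sum_add_distrib, Finset.sum_const, Nat.card_Icc,
      Nat.add_sub_cancel, nsmul_eq_mul]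
    ring
  have htop : ∑ i ∈ Finset.Icc 1 (m + 1), tval a i =
      ∑ i ∈ Finset.Icc 1 m, tval a i + tval a (m + 1) :=
    Finset.sum_Icc_succ_top (by omega) _
  have hbot : ∑ i ∈ Finset.Icc 1 (m + 1), tval a i =
      tval a 1 + ∑ i ∈ Finset.Icc 1 m, tval a (i + 1) := by
    rw [← Finset.insert_Icc_add_one_left_eq_Icc (by omega : 1 ≤ m + 1),
      Finset.sum_insert (by simp), ← Finset.map_add_right_Icc, Finset.sum_map]
    rfl
  rw [sum_range_add_two, hmid, pairSubstCount_zero ha (by omega),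
    pairSubstCount_of_add_two_eq ha (by omega) rfl]
  linear_combination htop + hbot

theorem sum_sum_substCount_mul (ha : isHF a) :
    ∑ i ∈ Finset.range (m + 3), ∑ j ∈ Finset.range (m + 3),
        (if i + 2 ≤ j then substCount a i * substCount a j else 0) =
      ((q : ℤ) - 2) ^ 2 +
        (q - 2) * (∑ j ∈ Finset.Icc 2 (m + 1), (q - 3 + tval a j) +
          ∑ i ∈ Finset.Icc 1 m, (q - 3 + tval a i)) +
        ∑ i ∈ Finset.Icc 1 (m - 1),
          (q - 3 + tval a i) * ∑ j ∈ Finset.Icc (i + 2) (m + 1), (q - 3 + tval a j) := by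
  have hc : ∀ j ∈ Finset.Icc 1 (m + 1), substCount a j = q - 3 + tval a j := fun j hj => by
    rw [Finset.mem_Icc] at hj
    exact substCount_of_lt ha hj.1 (by omega)
  have hsum : ∀ {k l : ℕ}, 1 ≤ k → l ≤ m + 1 →
      ∑ j ∈ Finset.Icc k l, substCount a j = ∑ j ∈ Finset.Icc k l, (q - 3 + tval a j) :=
    fun hk hl => Finset.sum_congr rfl fun j hj => hc j (Finset.Icc_subset_Icc hk hl hj)
  have hdouble : ∑ i ∈ Finset.Icc 1 (m - 1),
        substCount a i * ∑ j ∈ Finset.Icc (i + 2) (m + 1), substCount a j =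
      ∑ i ∈ Finset.Icc 1 (m - 1),
        (q - 3 + tval a i) * ∑ j ∈ Finset.Icc (i + 2) (m + 1), (q - 3 + tval a j) :=
    Finset.sum_congr rfl fun i hi => by
      rw [hc i (Finset.Icc_subset_Icc le_rfl (by omega) hi), hsum (by omega) le_rfl]
  rw [sum_sum_ite_add_two_le, substCount_zero ha (by omega),
    substCount_of_add_one_eq ha (by omega) rfl, hsum (by omega) le_rfl, hsum le_rfl (by omega),
    hdouble]
  ring

end Sums

theorem stmt_6_general (q n : ℕ) (hn : 3 ≤ n)
    (a : Fin n → Fin q) (ha : a ∈ HFset q n) :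
    ((HFsphere a 2).card : ℤ) =
      3 * ((q : ℤ) - 2) ^ 2 + 2
        + ((n : ℤ) - 3) * (((q : ℤ) - 2) * ((q : ℤ) - 3) + 2)
        - 2 * (∑ i ∈ Finset.Icc 1 (n - 2), tval a i)
        - (∑ i ∈ Finset.Icc 1 (n - 3), sval a i)
        + ((q : ℤ) - 2) *
            ((∑ i ∈ Finset.Icc 2 (n - 2), ((q : ℤ) - 3 + tval a i))
              + (∑ i ∈ Finset.Icc 1 (n - 3), ((q : ℤ) - 3 + tval a i)))
        + ∑ i ∈ Finset.Icc 1 (n - 4),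
            (((q : ℤ) - 3 + tval a i) *
              ∑ j ∈ Finset.Icc (i + 2) (n - 2), ((q : ℤ) - 3 + tval a j)) := by
  obtain ⟨m, rfl⟩ : ∃ m, n = m + 3 := ⟨n - 3, by omega⟩
  have haHF : isHF a := (Finset.mem_filter.mp ha).2
  rw [card_HFsphere_two_eq_sum haHF, show m + 3 - 1 = m + 2 from rfl, sum_pairSubstCount haHF,
    sum_sum_substCount_mul haHF, show m + 3 - 2 = m + 1 from rfl, show m + 3 - 3 = m from rfl,
    show m + 3 - 4 = m - 1 by omega]
  push_cast
  ring

theorem stmt_6 (q n : ℕ) (hq : 2 ≤ q) (hn : 3 ≤ n)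
    (a : Fin n → Fin q) (ha : a ∈ HFset q n) :
    ((HFsphere a 2).card : ℤ) =
      3 * ((q : ℤ) - 2) ^ 2 + 2
        + ((n : ℤ) - 3) * (((q : ℤ) - 2) * ((q : ℤ) - 3) + 2)
        - 2 * (∑ i ∈ Finset.Icc 1 (n - 2), tval a i)
        - (∑ i ∈ Finset.Icc 1 (n - 3), sval a i)
        + ((q : ℤ) - 2) *
            ((∑ i ∈ Finset.Icc 2 (n - 2), ((q : ℤ) - 3 + tval a i))
              + (∑ i ∈ Finset.Icc 1 (n - 3), ((q : ℤ) - 3 + tval a i)))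
        + ∑ i ∈ Finset.Icc 1 (n - 4),
            (((q : ℤ) - 3 + tval a i) *
              ∑ j ∈ Finset.Icc (i + 2) (n - 2), ((q : ℤ) - 3 + tval a j)) :=
  stmt_6_general q n hn a ha
end

section
/- Let q ≥ 3 be an integer and let a = a_1 a_2 … a_n ∈ C_{q,n} satisfy a_i = a_{i+2} for every i with 1 ≤ i ≤ n−2. If n = 1 then |H_1(a)| = q−1, and if n ≥ 2 then |H_1(a)| = n(q−2). -/
open scoped Classical

noncomputable def validSet {q n : ℕ} (a : Fin n → Fin q) (i : Fin n) : Finset (Fin q) :=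
  Finset.univ.filter (fun c => c ≠ a i ∧
    (∀ h : (i : ℕ) + 1 < n, c ≠ a ⟨(i : ℕ) + 1, h⟩) ∧
    (∀ _ : 1 ≤ (i : ℕ), c ≠ a ⟨(i : ℕ) - 1, by omega⟩))

lemma sphere_card_eq_sum {q n : ℕ} (a : Fin n → Fin q) (ha : a ∈ HFset q n) :
    (HFsphere a 1).card = ∑ i : Fin n, (validSet a i).card := by
  classical
  rw [← Finset.card_sigma]
  have haHF : isHF a := by
    simpa [HFset] using ha
  refine (Finset.card_bij (fun p _ => Function.update a p.1 p.2) ?_ ?_ ?_).symm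
  · rintro ⟨i, c⟩ hp
    simp only [Finset.mem_sigma, validSet, Finset.mem_filter, Finset.mem_univ, true_and] at hp
    obtain ⟨hc, hr, hl⟩ := hp
    have hupd : ∀ j : Fin n, j ≠ i → Function.update a i c j = a j := fun j hj =>
      Function.update_of_ne hj _ _
    have hfil : ({j | a j ≠ Function.update a i c j} : Finset (Fin n)) = {i} := by
      ext j
      simp only [Finset.mem_filter, Finset.mem_univ, true_and, Finset.mem_singleton]
      constructor
      · intro hj
        by_contra hne
        exact hj (hupd j hne).symm
      · rintro rfl
        rw [Function.update_self]
        exact fun h => hc h.symm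
    show Function.update a i c ∈ HFsphere a 1
    simp only [HFsphere, HFset, Finset.mem_filter, Finset.mem_univ, true_and]
    constructor
    · intro j hjn
      have hj1 : j < n := by omega
      by_cases h1 : (⟨j, hj1⟩ : Fin n) = i
      · have hiv : (i : ℕ) = j := by rw [← h1]
        have hne : (⟨j+1, hjn⟩ : Fin n) ≠ i := by
          intro he
          have := congrArg Fin.val he
          simp only at this
          omega
        rw [hupd _ hne, h1, Function.update_self]
        have hjeq : (⟨j+1, hjn⟩ : Fin n) = ⟨(i:ℕ)+1, by omega⟩ := by
          ext; simp only; omega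
        rw [hjeq]
        exact hr _
      · rw [hupd _ h1]
        by_cases h2 : (⟨j+1, hjn⟩ : Fin n) = i
        · have hiv : (i : ℕ) = j + 1 := by rw [← h2]
          rw [h2, Function.update_self]
          have hjq : (⟨j, hj1⟩ : Fin n) = ⟨(i:ℕ)-1, by omega⟩ := by
            ext; simp only; omega
          rw [hjq]
          exact fun he => hl (by omega) he.symm
        · rw [hupd _ h2]
          exact haHF j hjn
    · show hammingDist a (Function.update a i c) = 1
      rw [hammingDist, hfil, Finset.card_singleton]
  · rintro ⟨i, c⟩ hp ⟨i', c'⟩ hp' heq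
    simp only [Finset.mem_sigma, validSet, Finset.mem_filter, Finset.mem_univ, true_and] at hp hp'
    have heq' : Function.update a i c = Function.update a i' c' := heq
    have hii : i = i' := by
      by_contra hne
      have h1 := congrFun heq' i
      rw [Function.update_self, Function.update_of_ne hne] at h1
      exact hp.1 h1
    subst hii
    have h1 := congrFun heq' i
    rw [Function.update_self, Function.update_self] at h1
    simp [h1]
  · intro z hz
    simp only [HFsphere, HFset, Finset.mem_filter, Finset.mem_univ, true_and] at hz
    obtain ⟨hzHF, hzd⟩ := hz
    rw [hammingDist, Finset.card_eq_one] at hzd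
    obtain ⟨i, hi⟩ := hzd
    have hmem : ∀ j : Fin n, a j ≠ z j ↔ j = i := by
      intro j
      have := Finset.ext_iff.mp hi j
      simpa using this
    have hzeq : z = Function.update a i (z i) := by
      funext j
      by_cases hj : j = i
      · subst hj; rw [Function.update_self]
      · rw [Function.update_of_ne hj]
        by_contra hne
        exact hj ((hmem j).mp (fun h => hne h.symm))
    refine ⟨⟨i, z i⟩, ?_, hzeq.symm⟩
    simp only [Finset.mem_sigma, validSet, Finset.mem_filter, Finset.mem_univ, true_and]
    refine ⟨fun h => (hmem i).mpr rfl h.symm, ?_, ?_⟩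
    · intro h hc
      have hne : (⟨(i:ℕ)+1, h⟩ : Fin n) ≠ i := by
        intro he; have := congrArg Fin.val he; simp only at this; omega
      have hz1 : z ⟨(i:ℕ)+1, h⟩ = a ⟨(i:ℕ)+1, h⟩ := by
        by_contra hne2
        exact hne ((hmem _).mp (fun he => hne2 he.symm))
      have hh := hzHF (i : ℕ) h
      apply hh
      have hie : (⟨(i:ℕ), by omega⟩ : Fin n) = i := by ext; rfl
      rw [hie, hz1, ← hc]
    · intro h hc
      have h' : (i:ℕ) - 1 + 1 < n := by have := i.isLt; omega
      have hnei : (⟨(i:ℕ)-1, by omega⟩ : Fin n) ≠ i := by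
        intro he; have := congrArg Fin.val he; simp only at this; omega
      have hz1 : z ⟨(i:ℕ)-1, by omega⟩ = a ⟨(i:ℕ)-1, by omega⟩ := by
        by_contra hne2
        exact hnei ((hmem _).mp (fun he => hne2 he.symm))
      have hh := hzHF ((i:ℕ) - 1) h'
      apply hh
      have hie : (⟨(i:ℕ)-1+1, h'⟩ : Fin n) = i := by ext; simp only; omega
      rw [hie, hz1, ← hc]

lemma validSet_card_of_two_le {q n : ℕ} (hn : 2 ≤ n) (a : Fin n → Fin q)
    (ha : a ∈ HFset q n)
    (hper : ∀ i : ℕ, ∀ h : i + 2 < n, a ⟨i, by omega⟩ = a ⟨i + 2, h⟩)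
    (i : Fin n) : (validSet a i).card = q - 2 := by
  classical
  have haHF : isHF a := by simpa [HFset] using ha
  have hilt := i.isLt
  obtain ⟨w, hw, hset⟩ : ∃ w : Fin q, a i ≠ w ∧
      validSet a i = Finset.univ \ {a i, w} := by
    by_cases h : (i : ℕ) + 1 < n
    · refine ⟨a ⟨(i:ℕ)+1, h⟩, ?_, ?_⟩
      · have := haHF (i : ℕ) h
        have hie : (⟨(i:ℕ), by omega⟩ : Fin n) = i := by ext; rfl
        rwa [hie] at this
      · ext c
        simp only [validSet, Finset.mem_filter, Finset.mem_univ, true_and,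
          Finset.mem_sdiff, Finset.mem_insert, Finset.mem_singleton, not_or]
        constructor
        · rintro ⟨h1, h2, _⟩
          exact ⟨h1, h2 h⟩
        · rintro ⟨h1, h2⟩
          refine ⟨h1, fun _ => h2, fun hi1 hc => ?_⟩
          have hp := hper ((i:ℕ) - 1) (by omega)
          have he : (⟨(i:ℕ)-1+2, by omega⟩ : Fin n) = ⟨(i:ℕ)+1, h⟩ := by
            ext; simp only; omega
          rw [he] at hp
          exact h2 (hc.trans hp)
    · have hi1 : 1 ≤ (i : ℕ) := by omega
      refine ⟨a ⟨(i:ℕ)-1, by omega⟩, ?_, ?_⟩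
      · have h' : (i:ℕ) - 1 + 1 < n := by omega
        have := haHF ((i:ℕ) - 1) h'
        have hie : (⟨(i:ℕ)-1+1, h'⟩ : Fin n) = i := by ext; simp only; omega
        rw [hie] at this
        exact fun he => this he.symm
      · ext c
        simp only [validSet, Finset.mem_filter, Finset.mem_univ, true_and,
          Finset.mem_sdiff, Finset.mem_insert, Finset.mem_singleton, not_or]
        constructor
        · rintro ⟨h1, _, h3⟩
          exact ⟨h1, h3 hi1⟩
        · rintro ⟨h1, h2⟩
          exact ⟨h1, fun h' => absurd h' h, fun _ => h2⟩
  rw [hset, Finset.card_sdiff_of_subset (Finset.subset_univ _), Finset.card_univ,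
    Fintype.card_fin, Finset.card_pair hw]

theorem stmt_9 (q n : ℕ) (hq : 3 ≤ q)
    (a : Fin n → Fin q) (ha : a ∈ HFset q n)
    (hper : ∀ i : ℕ, ∀ h : i + 2 < n, a ⟨i, by omega⟩ = a ⟨i + 2, h⟩) :
    (n = 1 → (HFsphere a 1).card = q - 1) ∧
    (2 ≤ n → (HFsphere a 1).card = n * (q - 2)) := by
  constructor
  · rintro rfl
    rw [sphere_card_eq_sum a ha]
    have hv : ∀ i : Fin 1, validSet a i = Finset.univ.filter (· ≠ a i) := by
      intro i
      ext c
      have : (i : ℕ) = 0 := by omega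
      simp only [validSet, Finset.mem_filter, Finset.mem_univ, true_and]
      constructor
      · exact fun h => h.1
      · exact fun h => ⟨h, fun h' => by omega, fun h' => by omega⟩
    rw [Finset.sum_congr rfl (fun i _ => by rw [hv i])]
    simp [Finset.filter_ne', Finset.card_erase_of_mem]
  · intro hn
    rw [sphere_card_eq_sum a ha,
      Finset.sum_congr rfl (fun i _ => validSet_card_of_two_le hn a ha hper i),
      Finset.sum_const, Finset.card_univ, Fintype.card_fin, smul_eq_mul]
end

section
/- (Gilbert–Varshamov lower bound for HF codes.) Let q ≥ 2, n ≥ 1 and d ≥ 1 be integers, and set S_max = max_{a ∈ C_{q,n}} Σ_{r=0}^{d−1} |H_r(a)|. Then there exists an HF code C ⊆ C_{q,n} in which any two distinct codewords have Hamming distance at least d and |C| ≥ ⌈ q(q−1)^{n−1} / S_max ⌉. -/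
open scoped Classical

/-!
A code of maximal size among the HF codes with minimum distance `d` is also a covering code:
an HF word at distance `≥ d` from every codeword could be added to it. Hence the `|C|` Hamming
balls of radius `d - 1` around the codewords, each containing at most `S_max` HF words, cover
all `q (q - 1)^(n - 1)` HF words.
-/

theorem exists_code_card_le_card_mul {ι : Type*} {β : ι → Type*} [Fintype ι]
    [∀ i, DecidableEq (β i)] (X : Finset (∀ i, β i)) {d : ℕ} (hd : 0 < d) (S : ℕ)
    (hball : ∀ a ∈ X, (X.filter (fun z => hammingDist a z < d)).card ≤ S) :
    ∃ C ⊆ X, (∀ c₁ ∈ C, ∀ c₂ ∈ C, c₁ ≠ c₂ → d ≤ hammingDist c₁ c₂) ∧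
      X.card ≤ C.card * S := by
  let codes := X.powerset.filter
    (fun C => ∀ c₁ ∈ C, ∀ c₂ ∈ C, c₁ ≠ c₂ → d ≤ hammingDist c₁ c₂)
  have hempty : ∅ ∈ codes := by simp [codes]
  obtain ⟨C, hC, hCmax⟩ := codes.exists_max_image Finset.card ⟨∅, hempty⟩
  obtain ⟨hCX, hCdist⟩ : C ⊆ X ∧ _ := by simpa [codes] using hC
  refine ⟨C, hCX, hCdist, ?_⟩
  have hcover : X ⊆ C.biUnion (fun c => X.filter (fun z => hammingDist c z < d)) := by
    intro z hz
    by_contra hfar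
    simp only [Finset.mem_biUnion, Finset.mem_filter, not_exists, not_and, hz, true_and,
      not_lt] at hfar
    have hzC : z ∉ C := fun hzC => by simpa using (hfar z hzC).trans_lt' hd
    have hins : insert z C ∈ codes := by
      simp only [codes, Finset.mem_filter, Finset.mem_powerset, Finset.forall_mem_insert]
      refine ⟨Finset.insert_subset hz hCX, ⟨fun h => (h rfl).elim, fun c hc _ => ?_⟩,
        fun c hc => ⟨fun _ => hfar c hc, hCdist c hc⟩⟩
      rw [hammingDist_comm]
      exact hfar c hc
    have := hCmax _ hins
    rw [Finset.card_insert_of_notMem hzC] at this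
    omega
  exact (Finset.card_le_card hcover).trans
    (Finset.card_biUnion_le_card_mul _ _ _ fun c hc => hball c (hCX hc))

theorem isHF_iff_succ {q n : ℕ} (a : Fin (n + 1) → Fin q) :
    isHF a ↔ ∀ i : Fin n, a i.castSucc ≠ a i.succ :=
  ⟨fun h i => h i (by omega), fun h i hi => h ⟨i, by omega⟩⟩

theorem isHF_cons_iff {q n : ℕ} (x : Fin q) (b : Fin (n + 1) → Fin q) :
    isHF (Fin.cons x b : Fin (n + 2) → Fin q) ↔ x ≠ b 0 ∧ isHF b := by
  simp only [isHF_iff_succ, Fin.forall_fin_succ (n := n), Fin.castSucc_zero, Fin.cons_zero,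
    ← Fin.succ_castSucc, Fin.cons_succ]

theorem card_HFset_one (q : ℕ) : (HFset q 1).card = q := by
  rw [HFset, Finset.filter_true_of_mem fun a _ i hi => absurd hi (by omega)]
  simp

theorem mem_HFset_cons_iff {q n : ℕ} (x : Fin q) (b : Fin (n + 1) → Fin q) :
    (Fin.cons x b : Fin (n + 2) → Fin q) ∈ HFset q (n + 2) ↔
      x ≠ b 0 ∧ b ∈ HFset q (n + 1) := by
  simp only [HFset, Finset.mem_filter, Finset.mem_univ, true_and, isHF_cons_iff]

theorem filter_tail_HFset_eq_map {q n : ℕ} {b : Fin (n + 1) → Fin q}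
    (hb : b ∈ HFset q (n + 1)) :
    (HFset q (n + 2)).filter (fun a => Fin.tail a = b) =
      (Finset.univ.erase (b 0)).map
        ⟨fun x => Fin.cons x b, Fin.cons_left_injective (α := fun _ => Fin q) b⟩ := by
  ext a
  induction a using Fin.consCases with
  | cons x c =>
    simp only [Finset.mem_filter, mem_HFset_cons_iff, Fin.tail_cons, Finset.mem_map,
      Finset.mem_erase, Finset.mem_univ, and_true, Function.Embedding.coeFn_mk]
    constructor
    · rintro ⟨⟨hx, -⟩, rfl⟩
      exact ⟨x, hx, rfl⟩
    · rintro ⟨y, hy, h⟩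
      obtain ⟨rfl, rfl⟩ := Fin.cons_inj.1 h
      exact ⟨⟨hy, hb⟩, rfl⟩

theorem card_HFset_add_two (q n : ℕ) :
    (HFset q (n + 2)).card = (HFset q (n + 1)).card * (q - 1) := by
  rw [Finset.card_eq_sum_card_fiberwise (f := Fin.tail) (t := HFset q (n + 1))]
  · exact Finset.sum_const_nat fun b hb => by simp [filter_tail_HFset_eq_map hb]
  · intro a ha
    induction a using Fin.consCases with
    | cons x c => exact ((mem_HFset_cons_iff x c).1 ha).2

theorem card_HFset (q : ℕ) {n : ℕ} (hn : 1 ≤ n) :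
    (HFset q n).card = q * (q - 1) ^ (n - 1) := by
  induction n, hn using Nat.le_induction with
  | base => simp [card_HFset_one]
  | succ n hn ih =>
    obtain ⟨m, rfl⟩ := Nat.exists_eq_add_of_le' hn
    rw [card_HFset_add_two, ih, Nat.add_sub_cancel, Nat.add_sub_cancel, pow_succ, mul_assoc]

theorem card_filter_hammingDist_lt_HFset {q n : ℕ} (a : Fin n → Fin q) (d : ℕ) :
    ((HFset q n).filter (fun z => hammingDist a z < d)).card =
      ∑ r ∈ Finset.range d, (HFsphere a r).card := by
  rw [Finset.card_eq_sum_card_fiberwise (f := hammingDist a) (t := Finset.range d)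
    (fun z hz => Finset.mem_range.2 (Finset.mem_filter.1 hz).2)]
  refine Finset.sum_congr rfl fun r hr => ?_
  rw [HFsphere, Finset.filter_filter]
  congr 1
  exact Finset.filter_congr fun z _ => by
    simp only [and_iff_right_iff_imp]
    exact fun h => h ▸ Finset.mem_range.1 hr

theorem stmt_16_general (q n d : ℕ) (hn : 1 ≤ n) (hd : 1 ≤ d)
    (Smax : ℕ)
    (hSmax_le : ∀ a ∈ HFset q n,
      ∑ r ∈ Finset.range d, (HFsphere a r).card ≤ Smax) :
    ∃ C : Finset (Fin n → Fin q), C ⊆ HFset q n ∧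
      (∀ c₁ ∈ C, ∀ c₂ ∈ C, c₁ ≠ c₂ → d ≤ hammingDist c₁ c₂) ∧
      ⌈((q : ℚ) * ((q : ℚ) - 1) ^ (n - 1)) / (Smax : ℚ)⌉ ≤ (C.card : ℤ) := by
  obtain ⟨C, hCX, hCdist, hcard⟩ := exists_code_card_le_card_mul (HFset q n) hd Smax
    fun a ha => (card_filter_hammingDist_lt_HFset a d).trans_le (hSmax_le a ha)
  refine ⟨C, hCX, hCdist, ?_⟩
  have hN : ((HFset q n).card : ℚ) = q * (q - 1) ^ (n - 1) := by
    rcases Nat.eq_zero_or_pos q with rfl | hq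
    · simp [card_HFset 0 hn]
    · rw [card_HFset q hn]
      push_cast [Nat.cast_sub hq]
      ring
  rw [Int.ceil_le, ← hN, Int.cast_natCast]
  exact div_le_of_le_mul₀ (Nat.cast_nonneg _) (Nat.cast_nonneg _) (mod_cast hcard)

/-- Gilbert–Varshamov lower bound for HF codes: `S_max` is the maximum over all
`a ∈ C_{q,n}` of `Σ_{r=0}^{d−1} |H_r(a)|`, and there is an HF code with minimum
distance at least `d` of size at least `⌈q(q−1)^{n−1}/S_max⌉`. -/
theorem stmt_16 (q n d : ℕ) (hq : 2 ≤ q) (hn : 1 ≤ n) (hd : 1 ≤ d)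
    (Smax : ℕ)
    (hSmax_le : ∀ a ∈ HFset q n,
      ∑ r ∈ Finset.range d, (HFsphere a r).card ≤ Smax)
    (hSmax_mem : ∃ a ∈ HFset q n,
      ∑ r ∈ Finset.range d, (HFsphere a r).card = Smax) :
    ∃ C : Finset (Fin n → Fin q), C ⊆ HFset q n ∧
      (∀ c₁ ∈ C, ∀ c₂ ∈ C, c₁ ≠ c₂ → d ≤ hammingDist c₁ c₂) ∧
      ⌈((q : ℚ) * ((q : ℚ) - 1) ^ (n - 1)) / (Smax : ℚ)⌉ ≤ (C.card : ℤ) :=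
  stmt_16_general q n d hn hd Smax hSmax_le
end

section
/- Let q ≥ 2, n ≥ 1 and d ≥ 1 be integers and let C ⊆ C_{q,n} be an HF code of maximum possible size among all subsets of C_{q,n} in which any two distinct codewords have Hamming distance at least d, with M = |C|. Let Ū = (1/M) · Σ_{c ∈ C} Σ_{r=0}^{d−1} |H_r(c)| (a positive rational number). Then M ≥ ⌈ q(q−1)^{n−1} / Ū ⌉. -/
open scoped Classical

namespace Stmt18Aux

lemma mod_cancel {q a s s' : ℕ} (hs : s < q) (hs' : s' < q)
    (h : (a + s) % q = (a + s') % q) : s = s' := by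
  have h2 : s ≡ s' [MOD q] := Nat.ModEq.add_left_cancel' a h
  rwa [Nat.ModEq, Nat.mod_eq_of_lt hs, Nat.mod_eq_of_lt hs'] at h2

variable (q n : ℕ)

noncomputable def step (y : Fin (n-1) → Fin (q-1)) (j : ℕ) : ℕ :=
  if h : j < n - 1 then (y ⟨j, h⟩).val + 1 else 0

lemma step_lt (hq : 2 ≤ q) (y : Fin (n-1) → Fin (q-1)) (j : ℕ) :
    step q n y j < q := by
  unfold step
  split
  · have := (y ⟨j, by assumption⟩).isLt
    omega
  · omega

lemma step_pos (y : Fin (n-1) → Fin (q-1)) (j : ℕ) (h : j < n - 1) :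
    0 < step q n y j := by
  simp [step, h]

noncomputable def psum (x : Fin q) (y : Fin (n-1) → Fin (q-1)) (k : ℕ) : ℕ :=
  x.val + ∑ j ∈ Finset.range k, step q n y j

lemma psum_succ (x : Fin q) (y : Fin (n-1) → Fin (q-1)) (k : ℕ) :
    psum q n x y (k+1) = psum q n x y k + step q n y k := by
  unfold psum
  rw [Finset.sum_range_succ]
  ring

noncomputable def emb (hq0 : 0 < q) (x : Fin q) (y : Fin (n-1) → Fin (q-1)) :
    Fin n → Fin q :=
  fun i => ⟨psum q n x y i.val % q, Nat.mod_lt _ hq0⟩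

lemma emb_isHF (hq : 2 ≤ q) (hq0 : 0 < q) (x : Fin q) (y : Fin (n-1) → Fin (q-1)) :
    isHF (emb q n hq0 x y) := by
  intro i h hne
  have hv : psum q n x y i % q = psum q n x y (i+1) % q := congrArg Fin.val hne
  rw [psum_succ] at hv
  have hv' : (psum q n x y i + 0) % q = (psum q n x y i + step q n y i) % q := by
    simpa using hv
  have := mod_cancel (by omega) (step_lt q n hq y i) hv'
  have := step_pos q n y i (by omega)
  omega

lemma emb_inj (hq : 2 ≤ q) (hq0 : 0 < q) (hn : 1 ≤ n) :
    Function.Injective (fun p : Fin q × (Fin (n-1) → Fin (q-1)) =>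
      emb q n hq0 p.1 p.2) := by
  rintro ⟨x, y⟩ ⟨x', y'⟩ hfe
  have hval : ∀ i : Fin n, psum q n x y i.val % q = psum q n x' y' i.val % q :=
    fun i => congrArg Fin.val (congrFun hfe i)
  have h0 := hval ⟨0, by omega⟩
  simp only [psum, Finset.range_zero, Finset.sum_empty, add_zero] at h0
  rw [Nat.mod_eq_of_lt x.isLt, Nat.mod_eq_of_lt x'.isLt] at h0
  have hx : x = x' := Fin.ext h0
  have key : ∀ k, k ≤ n - 1 → psum q n x y k = psum q n x' y' k := by
    intro k
    induction k with
    | zero => intro _; simp [psum, hx]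
    | succ k ih =>
      intro hk
      have hpk := ih (by omega)
      have hi : k + 1 < n := by omega
      have hv := hval ⟨k+1, hi⟩
      simp only at hv
      rw [psum_succ, psum_succ, hpk] at hv
      have := mod_cancel (step_lt q n hq y k) (step_lt q n hq y' k) hv
      rw [psum_succ, psum_succ, hpk, this]
  have hy : y = y' := by
    funext j
    have h1 := key j.val (by omega)
    have h2 := key (j.val + 1) (by have := j.isLt; omega)
    rw [psum_succ, psum_succ, h1] at h2
    have hst : step q n y j.val = step q n y' j.val := by omega
    simp only [step, j.isLt, dif_pos, Fin.eta] at hst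
    exact Fin.ext (by omega)
  rw [hx, hy]

lemma card_HFset_ge (hq : 2 ≤ q) (hn : 1 ≤ n) :
    q * (q-1)^(n-1) ≤ (HFset q n).card := by
  have hq0 : 0 < q := by omega
  have hmaps : ∀ p ∈ (Finset.univ : Finset (Fin q × (Fin (n-1) → Fin (q-1)))),
      emb q n hq0 p.1 p.2 ∈ HFset q n := by
    intro p _
    simp only [HFset, Finset.mem_filter, Finset.mem_univ, true_and]
    exact emb_isHF q n hq hq0 p.1 p.2
  have := Finset.card_le_card_of_injOn _ hmaps ((emb_inj q n hq hq0 hn).injOn)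
  simpa using this

end Stmt18Aux

/-- For a maximum-size HF code `C` with `M = |C|` and `Ū` the average over `c ∈ C`
of `Σ_{r=0}^{d−1} |H_r(c)|`, one has `M ≥ ⌈q(q−1)^{n−1}/Ū⌉`. -/
theorem stmt_18 (q n d : ℕ) (hq : 2 ≤ q) (hn : 1 ≤ n) (hd : 1 ≤ d)
    (C : Finset (Fin n → Fin q)) (hC : C ⊆ HFset q n)
    (hdist : ∀ c₁ ∈ C, ∀ c₂ ∈ C, c₁ ≠ c₂ → d ≤ hammingDist c₁ c₂)
    (hmax : ∀ C' : Finset (Fin n → Fin q), C' ⊆ HFset q n →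
      (∀ c₁ ∈ C', ∀ c₂ ∈ C', c₁ ≠ c₂ → d ≤ hammingDist c₁ c₂) → C'.card ≤ C.card)
    (U : ℚ)
    (hU : U = (∑ c ∈ C, ∑ r ∈ Finset.range d,
      ((HFsphere c r).card : ℚ)) / (C.card : ℚ)) :
    ⌈((q : ℚ) * ((q : ℚ) - 1) ^ (n - 1)) / U⌉ ≤ (C.card : ℤ) := by
  -- covering property
  have hcov : ∀ z ∈ HFset q n, ∃ c ∈ C, hammingDist c z < d := by
    intro z hz
    by_contra hcon
    push_neg at hcon
    have hzC : z ∉ C := by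
      intro hzc
      have := hcon z hzc
      simp [hammingDist_self] at this
      omega
    have hsub' : insert z C ⊆ HFset q n := by
      intro w hw
      rcases Finset.mem_insert.mp hw with h | h
      · rwa [h]
      · exact hC h
    have hdist' : ∀ c₁ ∈ insert z C, ∀ c₂ ∈ insert z C, c₁ ≠ c₂ →
        d ≤ hammingDist c₁ c₂ := by
      intro c₁ h₁ c₂ h₂ hne
      rcases Finset.mem_insert.mp h₁ with h₁ | h₁ <;>
        rcases Finset.mem_insert.mp h₂ with h₂ | h₂
      · exact absurd (h₁.trans h₂.symm) hne
      · rw [h₁, hammingDist_comm]; exact hcon c₂ h₂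
      · rw [h₂]; exact hcon c₁ h₁
      · exact hdist c₁ h₁ c₂ h₂ hne
    have := hmax _ hsub' hdist'
    rw [Finset.card_insert_of_notMem hzC] at this
    omega
  -- HFset covered by spheres
  have hsub : HFset q n ⊆ C.biUnion (fun c =>
      (Finset.range d).biUnion (fun r => HFsphere c r)) := by
    intro z hz
    obtain ⟨c, hc, hlt⟩ := hcov z hz
    refine Finset.mem_biUnion.mpr ⟨c, hc, Finset.mem_biUnion.mpr
      ⟨hammingDist c z, Finset.mem_range.mpr hlt, ?_⟩⟩
    simp [HFsphere, hz]
  set S : ℕ := ∑ c ∈ C, ∑ r ∈ Finset.range d, (HFsphere c r).card with hS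
  have hNS : (HFset q n).card ≤ S := by
    calc (HFset q n).card ≤ (C.biUnion (fun c =>
        (Finset.range d).biUnion (fun r => HFsphere c r))).card :=
          Finset.card_le_card hsub
      _ ≤ ∑ c ∈ C, ((Finset.range d).biUnion (fun r => HFsphere c r)).card :=
          Finset.card_biUnion_le
      _ ≤ S := Finset.sum_le_sum (fun c _ => Finset.card_biUnion_le)
  have hNge := Stmt18Aux.card_HFset_ge q n hq hn
  -- C is nonempty
  have hApos : 0 < q * (q-1)^(n-1) := by
    have h1 : 0 < q - 1 := by omega
    have h2 : 0 < q := by omega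
    positivity
  have hM : 1 ≤ C.card := by
    have hpos : 0 < (HFset q n).card := by omega
    obtain ⟨z, hz⟩ := Finset.card_pos.mp hpos
    have h1 : ({z} : Finset (Fin n → Fin q)) ⊆ HFset q n := by
      simpa using hz
    have h2 : ∀ c₁ ∈ ({z} : Finset (Fin n → Fin q)),
        ∀ c₂ ∈ ({z} : Finset (Fin n → Fin q)),
        c₁ ≠ c₂ → d ≤ hammingDist c₁ c₂ := by
      intro c₁ h₁ c₂ h₂ hne
      simp at h₁ h₂
      exact absurd (h₁.trans h₂.symm) hne
    have := hmax _ h1 h2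
    simpa using this
  -- arithmetic
  have hSpos : 0 < S := by omega
  have hA : (q : ℚ) * ((q:ℚ) - 1)^(n-1) = ((q * (q-1)^(n-1) : ℕ) : ℚ) := by
    rw [Nat.cast_mul, Nat.cast_pow, Nat.cast_sub (by omega : 1 ≤ q), Nat.cast_one]
  have hUval : U = (S:ℚ)/(C.card:ℚ) := by
    rw [hU, hS]
    push_cast
    ring
  have hMne : (C.card : ℚ) ≠ 0 := by
    have : (0:ℚ) < C.card := by exact_mod_cast hM
    exact this.ne'
  have hSne : (S : ℚ) ≠ 0 := by
    have : (0:ℚ) < S := by exact_mod_cast hSpos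
    exact this.ne'
  have hUpos : 0 < U := by
    rw [hUval]
    apply div_pos
    · exact_mod_cast hSpos
    · exact_mod_cast hM
  have hAleS : (q:ℚ) * ((q:ℚ)-1)^(n-1) ≤ (S:ℚ) := by
    rw [hA]
    exact_mod_cast hNge.trans hNS
  have hSU : (S:ℚ)/U = (C.card : ℚ) := by
    rw [hUval]
    field_simp
  rw [Int.ceil_le]
  push_cast
  calc (q:ℚ) * ((q:ℚ)-1)^(n-1) / U ≤ (S:ℚ) / U := by gcongr
    _ = (C.card : ℚ) := hSU
end
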